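/- arXiv:2507.14530 — 2 statements merged into one kernel-verified Lean document; each statement's English description precedes it below -/
import Mathlib

section
/- Let F, Γ and Γ' be finite simple graphs, let (X,p,Γ') be an F-graph bundle and let f: Γ → Γ' be a morphism of graphs. Then the pullback along f of (X,p,Γ') is an F-graph bundle; that is, f^*p: f^*X → Γ is a surjective graph morphism, for each vertex v of Γ the fiber (f^*p)^{-1}(v) is isomorphic to F, the graph obtained from f^*X by deleting the type I edges together with the induced map to Γ is a |V_F|-fold covering of Γ, and the bijections between fibers over adjacent vertices induced by this covering are isomorphisms of graphs. -/
open Classical Matrix Kronecker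

universe u

noncomputable section

/-- A morphism of graphs: adjacent vertices are mapped to adjacent or equal vertices. -/
def IsGraphMorphism {V W : Type*} (G : SimpleGraph V) (H : SimpleGraph W) (f : V → W) : Prop :=
  ∀ ⦃a b : V⦄, G.Adj a b → H.Adj (f a) (f b) ∨ f a = f b

/-- The graph `X̃` obtained from `X` by deleting the edges lying inside fibers of `p`. -/
def delFiberEdges {VX VB : Type*} (X : SimpleGraph VX) (p : VX → VB) : SimpleGraph VX where
  Adj a b := X.Adj a b ∧ p a ≠ p b
  symm := by
    constructor
    intro a b h
    exact ⟨h.1.symm, Ne.symm h.2⟩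
  loopless := by
    constructor
    intro a h
    exact X.irrefl h.1

/-- `(X, p, B)` is an `F`-graph bundle. -/
structure IsGraphBundle {VF VX VB : Type*} (F : SimpleGraph VF) (X : SimpleGraph VX)
    (p : VX → VB) (B : SimpleGraph VB) : Prop where
  morphism : IsGraphMorphism X B p
  surj : Function.Surjective p
  fiber_iso : ∀ v : VB, Nonempty ((X.induce (p ⁻¹' {v})) ≃g F)
  fiber_card : ∀ v : VB, Nat.card (p ⁻¹' {v}) = Nat.card VF
  covering : ∀ x : VX,
    Set.BijOn p ((delFiberEdges X p).neighborSet x) (B.neighborSet (p x))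
  transport : ∀ ⦃v w : VB⦄, B.Adj v w →
    ∃ ψ : (X.induce (p ⁻¹' {v})) ≃g (X.induce (p ⁻¹' {w})),
      ∀ x : (p ⁻¹' {v}), X.Adj x.1 (ψ x).1

/-- Vertices of the pullback graph. -/
abbrev PullbackVert {VB VX VC : Type*} (f : VB → VC) (p : VX → VC) :=
  {a : VB × VX // f a.1 = p a.2}

/-- The total space of the pullback of the bundle `(X, p, C)` along `f : B → C`. -/
def pullbackGraph {VB VX VC : Type*} (B : SimpleGraph VB) (X : SimpleGraph VX)
    (f : VB → VC) (p : VX → VC) (C : SimpleGraph VC) :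
    SimpleGraph (PullbackVert f p) where
  Adj a b :=
    (a.1.1 = b.1.1 ∧ X.Adj a.1.2 b.1.2) ∨
    (B.Adj a.1.1 b.1.1 ∧ f a.1.1 = f b.1.1 ∧ a.1.2 = b.1.2) ∨
    (B.Adj a.1.1 b.1.1 ∧ C.Adj (f a.1.1) (f b.1.1) ∧ X.Adj a.1.2 b.1.2)
  symm := by
    constructor
    rintro a b (⟨h1, h2⟩ | ⟨h1, h2, h3⟩ | ⟨h1, h2, h3⟩)
    · exact Or.inl ⟨h1.symm, h2.symm⟩
    · exact Or.inr (Or.inl ⟨h1.symm, h2.symm, h3.symm⟩)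
    · exact Or.inr (Or.inr ⟨h1.symm, h2.symm, h3.symm⟩)
  loopless := by
    constructor
    rintro a (⟨_, h⟩ | ⟨h, _⟩ | ⟨h, _⟩)
    · exact X.irrefl h
    · exact B.irrefl h
    · exact B.irrefl h

/-- The projection of the pullback bundle. -/
def pullbackProj {VB VX VC : Type*} (f : VB → VC) (p : VX → VC) :
    PullbackVert f p → VB := fun a => a.1.1

/-- Two graph bundles over the same base are equivalent. -/
def BundlesEquiv {VX VY VB : Type*} (X : SimpleGraph VX) (p : VX → VB)
    (Y : SimpleGraph VY) (q : VY → VB) : Prop :=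
  ∃ Φ : X ≃g Y, ∀ x, q (Φ x) = p x

/-- A graph bundle is trivial if it is equivalent to `(B □ F, π, B)` with `π (v, f) = v`. -/
def IsTrivialBundle {VF VX VB : Type*} (F : SimpleGraph VF) (X : SimpleGraph VX)
    (p : VX → VB) (B : SimpleGraph VB) : Prop :=
  ∃ Φ : X ≃g (B.boxProd F), ∀ x, (Φ x).1 = p x

/-- An `F`-voltage function on `B`. -/
structure VoltageFunction {VB VF : Type*} (B : SimpleGraph VB) (F : SimpleGraph VF) where
  volt : VB → VB → (F ≃g F)
  volt_symm : ∀ v w, volt w v = (volt v w).symm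

/-- The graph `B ×_φ F` associated with a voltage function. -/
def voltageGraph {VB VF : Type*} (B : SimpleGraph VB) (F : SimpleGraph VF)
    (φ : VoltageFunction B F) : SimpleGraph (VB × VF) where
  Adj a b := (B.Adj a.1 b.1 ∧ b.2 = φ.volt a.1 b.1 a.2) ∨ (a.1 = b.1 ∧ F.Adj a.2 b.2)
  symm := by
    constructor
    rintro a b (⟨h1, h2⟩ | ⟨h1, h2⟩)
    · refine Or.inl ⟨h1.symm, ?_⟩
      rw [φ.volt_symm, h2, RelIso.symm_apply_apply]
    · exact Or.inr ⟨h1.symm, h2.symm⟩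
  loopless := by
    constructor
    rintro a (⟨h, _⟩ | ⟨_, h⟩)
    · exact B.irrefl h
    · exact F.irrefl h

/-- The pullback of a voltage function along a graph morphism. -/
def pullbackVoltage {VB VC VF : Type*} (B : SimpleGraph VB) (C : SimpleGraph VC)
    (F : SimpleGraph VF) (f : VB → VC) (φ : VoltageFunction C F) : VoltageFunction B F where
  volt v w := if f v = f w then RelIso.refl _ else φ.volt (f v) (f w)
  volt_symm v w := by
    try dsimp only
    by_cases h : f v = f w
    · rw [if_pos h, if_pos h.symm]
      rfl
    · rw [if_neg h, if_neg (fun hh : f w = f v => h hh.symm), φ.volt_symm]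
/-- Adjacency matrix (over `ℝ`). -/
def adjMat {V : Type*} (G : SimpleGraph V) : Matrix V V ℝ :=
  Matrix.of fun a b => if G.Adj a b then 1 else 0

/-- Permutation matrix of an automorphism of `F`. -/
def permMat {VF : Type*} {F : SimpleGraph VF} (ψ : F ≃g F) : Matrix VF VF ℝ :=
  Matrix.of fun a b => if b = ψ a then 1 else 0

/-- The matrix `M_f` of a map of vertex sets. -/
def morMat {VB VC : Type*} (f : VB → VC) : Matrix VC VB ℝ :=
  Matrix.of fun c b => if f b = c then 1 else 0

/-- The matrix `A_B(ψ)` of a voltage function. -/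
def voltMat {VB VF : Type*} {B : SimpleGraph VB} {F : SimpleGraph VF}
    (φ : VoltageFunction B F) (ψ : F ≃g F) : Matrix VB VB ℝ :=
  Matrix.of fun v w => if B.Adj v w ∧ φ.volt v w = ψ then 1 else 0

instance instFiniteGraphIso {VF : Type*} [Finite VF] (F : SimpleGraph VF) :
    Finite (F ≃g F) :=
  Finite.of_injective (fun ψ => (ψ.toEquiv : VF ≃ VF)) (fun a b h => by
    cases a; cases b; simpa using h)

noncomputable instance instFintypeGraphIso {VF : Type*} [Finite VF] (F : SimpleGraph VF) :
    Fintype (F ≃g F) :=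
  Fintype.ofFinite _

/-- The image graph `f(Γ)` of a graph morphism. -/
def imageGraph {VB VC : Type*} (B : SimpleGraph VB) (f : VB → VC) :
    SimpleGraph (Set.range f) where
  Adj a b := a.1 ≠ b.1 ∧ ∃ v w, B.Adj v w ∧ f v = a.1 ∧ f w = b.1
  symm := by
    constructor
    rintro a b ⟨hne, v, w, h, hv, hw⟩
    exact ⟨hne.symm, w, v, h.symm, hw, hv⟩
  loopless := by
    constructor
    rintro a ⟨hne, -⟩
    exact hne rfl

/-- The Cayley graph of a group with respect to a set of generators. -/
def cayleyGraph {G : Type*} [Group G] (S : Set G) : SimpleGraph G :=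
  SimpleGraph.fromRel (fun x y => ∃ s ∈ S, y = x * s)

/-- The subdirect product of two groups with amalgamated factor group `B`. -/
def subdirSubgroup {A₁ A₂ B : Type*} [Group A₁] [Group A₂] [Group B]
    (φ₁ : A₁ →* B) (φ₂ : A₂ →* B) : Subgroup (A₁ × A₂) where
  carrier := {a : A₁ × A₂ | φ₁ a.1 = φ₂ a.2}
  one_mem' := by simp
  mul_mem' := by
    intro a b ha hb
    simp only [Set.mem_setOf_eq, Prod.fst_mul, Prod.snd_mul, _root_.map_mul] at *
    rw [ha, hb]
  inv_mem' := by
    intro a ha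
    simp only [Set.mem_setOf_eq, Prod.fst_inv, Prod.snd_inv, _root_.map_inv] at *
    rw [ha]

/-! The fiber of `f^*X` over `v` is a copy of the fiber of `X` over `f v`, the copy of `x` being
`(v, x)`. Over an edge `v ∼ w` of the base the covering edges of `f^*X` are the type II edges
`(v, x) ∼ (w, x)` when `f v = f w`, and otherwise the type III edges lying over the covering edges
`x ∼ y` of `X̃` above `f v ∼ f w`; so lifts, and the transports between fibers, are inherited
from `X` (or are the identity of the fiber of `X` over `f v = f w`). -/

namespace PullbackBundle

variable {VB VX VC : Type*} {B : SimpleGraph VB} {X : SimpleGraph VX} {C : SimpleGraph VC}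
  {f : VB → VC} {p : VX → VC}

theorem isGraphMorphism_pullbackProj :
    IsGraphMorphism (pullbackGraph B X f p C) B (pullbackProj f p) := by
  rintro a b (⟨hab, -⟩ | ⟨hab, -⟩ | ⟨hab, -⟩)
  exacts [Or.inr hab, Or.inl hab, Or.inl hab]

theorem surjective_pullbackProj (hp : Function.Surjective p) :
    Function.Surjective (pullbackProj f p) := fun v ↦
  have ⟨x, hx⟩ := hp (f v)
  ⟨⟨(v, x), hx.symm⟩, rfl⟩

theorem pullbackGraph_adj_iff_of_fst_eq {a b : PullbackVert f p} (h : a.1.1 = b.1.1) :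
    (pullbackGraph B X f p C).Adj a b ↔ X.Adj a.1.2 b.1.2 := by
  refine ⟨?_, fun hX ↦ Or.inl ⟨h, hX⟩⟩
  rintro (⟨-, hX⟩ | ⟨hB, -⟩ | ⟨hB, -⟩)
  · exact hX
  all_goals exact absurd (h ▸ hB) (B.loopless.irrefl _)

variable (B X C) in
/-- Allowing any `c = f v` instead of `f v` itself spares a transport along `f v = f w` when
comparing fibers over adjacent vertices. -/
def pullbackFiberIso (v : VB) {c : VC} (hc : f v = c) :
    (pullbackGraph B X f p C).induce (pullbackProj f p ⁻¹' {v}) ≃g X.induce (p ⁻¹' {c}) where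
  toFun a := ⟨a.1.1.2, by
    obtain ⟨⟨⟨v', x⟩, hx⟩, rfl : v' = v⟩ := a
    exact hx.symm.trans hc⟩
  invFun x := ⟨⟨(v, x.1), hc.trans (x.2 : p x.1 = c).symm⟩, rfl⟩
  left_inv := by
    rintro ⟨⟨⟨v', x⟩, hx⟩, rfl : v' = v⟩
    rfl
  right_inv _ := rfl
  map_rel_iff' {a b} := by
    obtain ⟨a, ha : a.1.1 = v⟩ := a
    obtain ⟨b, hb : b.1.1 = v⟩ := b
    exact (pullbackGraph_adj_iff_of_fst_eq (ha.trans hb.symm)).symm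

theorem delFiberEdges_pullbackGraph_adj_iff {a b : PullbackVert f p} :
    (delFiberEdges (pullbackGraph B X f p C) (pullbackProj f p)).Adj a b ↔
      B.Adj a.1.1 b.1.1 ∧ ((f a.1.1 = f b.1.1 ∧ a.1.2 = b.1.2) ∨
        (C.Adj (f a.1.1) (f b.1.1) ∧ X.Adj a.1.2 b.1.2)) := by
  constructor
  · rintro ⟨(⟨h, -⟩ | ⟨hB, hf, hx⟩ | ⟨hB, hC, hX⟩), hne⟩
    · exact absurd h hne
    · exact ⟨hB, Or.inl ⟨hf, hx⟩⟩
    · exact ⟨hB, Or.inr ⟨hC, hX⟩⟩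
  · rintro ⟨hB, (⟨hf, hx⟩ | ⟨hC, hX⟩)⟩
    · exact ⟨Or.inr (Or.inl ⟨hB, hf, hx⟩), hB.ne⟩
    · exact ⟨Or.inr (Or.inr ⟨hB, hC, hX⟩), hB.ne⟩

theorem bijOn_pullbackProj_neighborSet
    (hp : ∀ x, Set.BijOn p ((delFiberEdges X p).neighborSet x) (C.neighborSet (p x)))
    (hf : IsGraphMorphism B C f) (a : PullbackVert f p) :
    Set.BijOn (pullbackProj f p)
      ((delFiberEdges (pullbackGraph B X f p C) (pullbackProj f p)).neighborSet a)
      (B.neighborSet (pullbackProj f p a)) := by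
  obtain ⟨⟨v, x⟩, hx : f v = p x⟩ := a
  refine ⟨fun b hb ↦ (delFiberEdges_pullbackGraph_adj_iff.1 hb).1, ?_, ?_⟩
  · rintro ⟨⟨w, y⟩, hy⟩ hb ⟨⟨w', y'⟩, hy'⟩ hb' (rfl : w = w')
    replace hb := (delFiberEdges_pullbackGraph_adj_iff.1 hb).2
    replace hb' := (delFiberEdges_pullbackGraph_adj_iff.1 hb').2
    refine Subtype.ext (Prod.ext rfl ?_)
    by_cases hvw : f v = f w
    · have hC : ¬C.Adj (f v) (f w) := hvw ▸ C.loopless.irrefl _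
      exact (hb.resolve_right (hC ·.1)).2.symm.trans (hb'.resolve_right (hC ·.1)).2
    · have hyX := (hb.resolve_left (hvw ·.1)).2
      have hyX' := (hb'.resolve_left (hvw ·.1)).2
      exact (hp x).injOn ⟨hyX, hx ▸ hy ▸ hvw⟩ ⟨hyX', hx ▸ hy' ▸ hvw⟩ (hy.symm.trans hy')
  · intro w hvw
    by_cases hfvw : f v = f w
    · refine ⟨⟨(w, x), hfvw.symm.trans hx⟩, ?_, rfl⟩
      exact delFiberEdges_pullbackGraph_adj_iff.2 ⟨hvw, Or.inl ⟨hfvw, rfl⟩⟩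
    · have hC : C.Adj (f v) (f w) := (hf hvw).resolve_right hfvw
      obtain ⟨y, ⟨hxy, -⟩, hy⟩ := (hp x).surjOn (show C.Adj (p x) (f w) from hx ▸ hC)
      refine ⟨⟨(w, y), hy.symm⟩, ?_, rfl⟩
      exact delFiberEdges_pullbackGraph_adj_iff.2 ⟨hvw, Or.inr ⟨hC, hxy⟩⟩

theorem exists_pullbackFiber_transport {v w : VB} (hvw : B.Adj v w) {c c' : VC}
    (hc : f v = c) (hc' : f w = c') (ψ : X.induce (p ⁻¹' {c}) ≃g X.induce (p ⁻¹' {c'}))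
    (hψ : ∀ x, (c = c' ∧ x.1 = (ψ x).1) ∨ (C.Adj c c' ∧ X.Adj x.1 (ψ x).1)) :
    ∃ φ : (pullbackGraph B X f p C).induce (pullbackProj f p ⁻¹' {v}) ≃g
        (pullbackGraph B X f p C).induce (pullbackProj f p ⁻¹' {w}),
      ∀ a, (pullbackGraph B X f p C).Adj a.1 (φ a).1 := by
  refine ⟨((pullbackFiberIso B X C v hc).trans ψ).trans (pullbackFiberIso B X C w hc').symm, ?_⟩
  rintro ⟨⟨⟨v', x⟩, hx⟩, hv'⟩
  obtain rfl : v = v' := hv'.symm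
  subst hc hc'
  have hx' : x ∈ p ⁻¹' {f v} := hx.symm
  exact Or.inr ((hψ ⟨x, hx'⟩).imp (⟨hvw, ·⟩) (⟨hvw, ·⟩))

end PullbackBundle

open PullbackBundle in
theorem pullback_isGraphBundle_general
    {VF VX VB VC : Type*}
    (F : SimpleGraph VF) (X : SimpleGraph VX) (C : SimpleGraph VC) (B : SimpleGraph VB)
    (p : VX → VC) (f : VB → VC)
    (hX : IsGraphBundle F X p C) (hf : IsGraphMorphism B C f) :
    IsGraphBundle F (pullbackGraph B X f p C) (pullbackProj f p) B := by
  refine ⟨isGraphMorphism_pullbackProj, surjective_pullbackProj hX.surj,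
    fun v ↦ (hX.fiber_iso (f v)).map (pullbackFiberIso B X C v rfl).trans,
    fun v ↦ (Nat.card_congr (pullbackFiberIso B X C v rfl).toEquiv).trans (hX.fiber_card (f v)),
    bijOn_pullbackProj_neighborSet hX.covering hf, fun v w hvw ↦ ?_⟩
  by_cases hfvw : f v = f w
  · exact exists_pullbackFiber_transport hvw rfl hfvw.symm (RelIso.refl _)
      fun _ ↦ Or.inl ⟨rfl, rfl⟩
  · have hC : C.Adj (f v) (f w) := (hf hvw).resolve_right hfvw
    obtain ⟨ψ, hψ⟩ := hX.transport hC
    exact exists_pullbackFiber_transport hvw rfl rfl ψ fun x ↦ Or.inr ⟨hC, hψ x⟩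

/-- the pullback along `f` of an `F`-graph bundle is an `F`-graph bundle. -/
theorem pullback_isGraphBundle
    {VF VX VB VC : Type*} [Fintype VF] [Fintype VX] [Fintype VB] [Fintype VC]
    (F : SimpleGraph VF) (X : SimpleGraph VX) (C : SimpleGraph VC) (B : SimpleGraph VB)
    (p : VX → VC) (f : VB → VC)
    (hX : IsGraphBundle F X p C) (hf : IsGraphMorphism B C f) :
    IsGraphBundle F (pullbackGraph B X f p C) (pullbackProj f p) B :=
  pullback_isGraphBundle_general F X C B p f hX hf
end
end

section
/- Let (Xᵢ,pᵢ,Γ) be an Fᵢ-graph bundle for i = 1,2, let Y be a graph, and let αᵢ: Y → Xᵢ be morphisms of graphs such that p₁ ∘ α₁ = p₂ ∘ α₂ and this common composite preserves the edges (adjacent vertices are mapped to adjacent vertices). Then the map α₁ ⊞ α₂: Y → X₁ ⊞ X₂ defined by (α₁ ⊞ α₂)(y) = (α₁(y), α₂(y)) is a morphism of graphs, and composing it with the two projections of X₁ ⊞ X₂ to X₁ and X₂ recovers α₁ and α₂ respectively. -/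
open Classical Matrix Kronecker

universe u

noncomputable section

section GraphMorphism

variable {V W U : Type*} {G : SimpleGraph V} {H : SimpleGraph W} {K : SimpleGraph U}

theorem IsGraphMorphism.adj_of_adj_comp {f : V → W} (hf : IsGraphMorphism G H f) (p : W → U)
    {a b : V} (hab : G.Adj a b) (hp : K.Adj (p (f a)) (p (f b))) : H.Adj (f a) (f b) :=
  (hf hab).resolve_right fun h => hp.ne (congrArg p h)

end GraphMorphism

theorem pullbackGraph_adj_of_adj_of_adj {VB VX VC : Type*} {B : SimpleGraph VB}
    {X : SimpleGraph VX} {f : VB → VC} {p : VX → VC} {C : SimpleGraph VC}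
    {a b : PullbackVert f p} (hB : B.Adj a.1.1 b.1.1) (hC : C.Adj (f a.1.1) (f b.1.1))
    (hX : X.Adj a.1.2 b.1.2) : (pullbackGraph B X f p C).Adj a b :=
  Or.inr (Or.inr ⟨hB, hC, hX⟩)

theorem subdir_universal_general
    {VX₁ VX₂ VB VY : Type*}
    (X₁ : SimpleGraph VX₁) (X₂ : SimpleGraph VX₂) (B : SimpleGraph VB)
    (Y : SimpleGraph VY)
    (p₁ : VX₁ → VB) (p₂ : VX₂ → VB)
    (α₁ : VY → VX₁) (α₂ : VY → VX₂)
    (hα₁ : IsGraphMorphism Y X₁ α₁) (hα₂ : IsGraphMorphism Y X₂ α₂)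
    (hcomm : ∀ y, p₁ (α₁ y) = p₂ (α₂ y))
    (hpres : ∀ ⦃y z : VY⦄, Y.Adj y z → B.Adj (p₁ (α₁ y)) (p₁ (α₁ z))) :
    IsGraphMorphism Y (pullbackGraph X₁ X₂ p₁ p₂ B)
      (fun y => ⟨(α₁ y, α₂ y), hcomm y⟩) ∧
    (∀ y, ((⟨(α₁ y, α₂ y), hcomm y⟩ : PullbackVert p₁ p₂)).1.1 = α₁ y) ∧
    (∀ y, ((⟨(α₁ y, α₂ y), hcomm y⟩ : PullbackVert p₁ p₂)).1.2 = α₂ y) := by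
  refine ⟨fun y z hyz => Or.inl ?_, fun _ => rfl, fun _ => rfl⟩
  have hB₁ := hpres hyz
  have hB₂ : B.Adj (p₂ (α₂ y)) (p₂ (α₂ z)) := by rwa [← hcomm y, ← hcomm z]
  exact pullbackGraph_adj_of_adj_of_adj (hα₁.adj_of_adj_comp p₁ hyz hB₁) hB₁
    (hα₂.adj_of_adj_comp p₂ hyz hB₂)

/-- universal property of the subdirect product of graph bundles. -/
theorem subdir_universal
    {VF₁ VF₂ VX₁ VX₂ VB VY : Type*}
    [Fintype VF₁] [Fintype VF₂] [Fintype VX₁] [Fintype VX₂] [Fintype VB] [Fintype VY]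
    (F₁ : SimpleGraph VF₁) (F₂ : SimpleGraph VF₂)
    (X₁ : SimpleGraph VX₁) (X₂ : SimpleGraph VX₂) (B : SimpleGraph VB)
    (Y : SimpleGraph VY)
    (p₁ : VX₁ → VB) (p₂ : VX₂ → VB)
    (h₁ : IsGraphBundle F₁ X₁ p₁ B) (h₂ : IsGraphBundle F₂ X₂ p₂ B)
    (α₁ : VY → VX₁) (α₂ : VY → VX₂)
    (hα₁ : IsGraphMorphism Y X₁ α₁) (hα₂ : IsGraphMorphism Y X₂ α₂)
    (hcomm : ∀ y, p₁ (α₁ y) = p₂ (α₂ y))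
    (hpres : ∀ ⦃y z : VY⦄, Y.Adj y z → B.Adj (p₁ (α₁ y)) (p₁ (α₁ z))) :
    IsGraphMorphism Y (pullbackGraph X₁ X₂ p₁ p₂ B)
      (fun y => ⟨(α₁ y, α₂ y), hcomm y⟩) ∧
    (∀ y, ((⟨(α₁ y, α₂ y), hcomm y⟩ : PullbackVert p₁ p₂)).1.1 = α₁ y) ∧
    (∀ y, ((⟨(α₁ y, α₂ y), hcomm y⟩ : PullbackVert p₁ p₂)).1.2 = α₂ y) :=
  subdir_universal_general X₁ X₂ B Y p₁ p₂ α₁ α₂ hα₁ hα₂ hcomm hpres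
end
end
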